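/- Any function of 'attention-processor' form can be re-expressed in 'ordinary-processor' form: given f₂: ℝ × ℝ → ℝ and q₂: ℝ × ℝ → ℝ, there exist functions f₁: ℝ × ℝ^K → ℝ and q₁: ℝ → ℝ^K such that for all x ∈ ℝ^K and all k, f₂(x_k, ∑_{j≠k} q₂(x_k, x_j)) = f₁(x_k, ∑_{j≠k} q₁(x_j)), provided the remaining inputs (x_j)_{j≠k} can be recovered from ∑_{j≠k} q₁(x_j); in particular one may take q₁(x) = (𝟙[x ≤ t₁],...,𝟙[x ≤ t_K]) adapted so that the multiset {x_j : j≠k} is recoverable when the x_j come from a countable domain. Formally: if the x_j range over the rationals ℚ embedded in ℝ, then there exists an injective map from finite multisets of size K−1 of rationals into ℝ^K of the form M ↦ ∑_{x∈M} q₁(x), and hence the stated re-expression holds. -/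

import Mathlib

/-!
Encode a rational `x` by the constant vector `K ^ e(x)`, where `e : ℚ → ℕ` is injective. A multiset
of `K - 1` rationals has every multiplicity below `K`, so the multiplicities are the base-`K`
digits of its encoding sum, which therefore determines the multiset. Any function of the
multiset `{x_j : j ≠ k}`, such as `∑_{j ≠ k} q₂(x_k, x_j)`, then factors through that sum.
-/

theorem Nat.sum_mul_pow_injective {b n : ℕ} (hb : 1 < b) {c c' : Fin n → ℕ}
    (hc : ∀ i, c i < b) (hc' : ∀ i, c' i < b)
    (h : ∑ i, c i * b ^ (i : ℕ) = ∑ i, c' i * b ^ (i : ℕ)) : c = c' := by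
  refine List.ofFn_injective <| Nat.ofDigits_inj_of_len_eq hb (by simp) ?_ ?_ ?_
  · simpa [List.mem_ofFn] using hc
  · simpa [List.mem_ofFn] using hc'
  · simpa [Nat.ofDigits_eq_sum_mapIdx, List.mapIdx_eq_ofFn, List.sum_ofFn] using h

theorem Multiset.sum_map_eq_sum_count_smul {β : Type*} [AddCommMonoid β] {n : ℕ}
    {M : Multiset ℕ} (hM : ∀ x ∈ M, x < n) (f : ℕ → β) :
    (M.map f).sum = ∑ i : Fin n, M.count (i : ℕ) • f i := by
  rw [Finset.sum_multiset_map_count, Fin.sum_univ_eq_sum_range (fun i => M.count i • f i)]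
  refine Finset.sum_subset (fun x hx => Finset.mem_range.2 (hM x (Multiset.mem_toFinset.1 hx))) ?_
  intro x _ hx
  rw [Multiset.count_eq_zero_of_notMem (fun h => hx (Multiset.mem_toFinset.2 h)), zero_smul]

theorem Multiset.eq_of_sum_map_pow_eq {b : ℕ} (hb : 1 < b) {M M' : Multiset ℕ}
    (hM : ∀ i, M.count i < b) (hM' : ∀ i, M'.count i < b)
    (h : (M.map (b ^ ·)).sum = (M'.map (b ^ ·)).sum) : M = M' := by
  set n := (M + M').sup + 1
  have hlt : ∀ x ∈ M + M', x < n := fun x hx => Nat.lt_succ_of_le (Multiset.le_sup hx)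
  rw [M.sum_map_eq_sum_count_smul (n := n) (fun x hx => hlt x (Multiset.mem_add.2 (.inl hx))),
    M'.sum_map_eq_sum_count_smul (n := n) (fun x hx => hlt x (Multiset.mem_add.2 (.inr hx)))] at h
  have hcount := congrFun (Nat.sum_mul_pow_injective hb (fun i => hM i) (fun i => hM' i)
    (by simpa only [smul_eq_mul] using h))
  ext x
  by_cases hx : x < n
  · exact hcount ⟨x, hx⟩
  · rw [Multiset.count_eq_zero_of_notMem fun h => hx (hlt x (Multiset.mem_add.2 (.inl h))),
      Multiset.count_eq_zero_of_notMem fun h => hx (hlt x (Multiset.mem_add.2 (.inr h)))]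

theorem Multiset.injOn_sum_map_pow_encode {α : Type*} [Encodable α] {b : ℕ} (hb : 1 < b) :
    Set.InjOn (fun M : Multiset α => (M.map fun x => b ^ Encodable.encode x).sum)
      {M | Multiset.card M < b} := by
  intro M hM M' hM' h
  have hcount {N : Multiset α} (hN : Multiset.card N < b) (i : ℕ) :
      (N.map Encodable.encode).count i < b :=
    ((Multiset.count_le_card _ _).trans (Multiset.card_map _ _).le).trans_lt hN
  refine Multiset.map_injective Encodable.encode_injective <|
    Multiset.eq_of_sum_map_pow_eq hb (hcount hM) (hcount hM') ?_
  simpa only [Multiset.map_map, Function.comp_def] using h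

theorem Set.InjOn.exists_eqOn_comp {α β γ : Type*} [Nonempty α] {g : α → β} {s : Set α}
    (hg : Set.InjOn g s) (F : α → γ) : ∃ f : β → γ, Set.EqOn F (f ∘ g) s :=
  ⟨F ∘ Function.invFunOn g s, fun _ ha => congrArg F (hg.leftInvOn_invFunOn ha).symm⟩

theorem exists_injOn_multiset_sum_map (α : Type*) [Encodable α] {K : ℕ} (hK : 2 ≤ K) :
    ∃ q : α → Fin K → ℝ,
      Set.InjOn (fun M : Multiset α => (M.map q).sum) {M | Multiset.card M = K - 1} := by
  refine ⟨fun x _ => ((K ^ Encodable.encode x : ℕ) : ℝ), fun M hM M' hM' h => ?_⟩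
  have hinj := (Multiset.injOn_sum_map_pow_encode (α := α) (b := K) (by omega)).mono
    fun M (hM : Multiset.card M = K - 1) => show Multiset.card M < K by omega
  have h0 := congrFun h ⟨0, by omega⟩
  simp only [Pi.multiset_sum_apply, Multiset.map_map, Function.comp_def] at h0
  exact hinj hM hM' <| Nat.cast_injective (R := ℝ) <| by
    simpa only [Nat.cast_multiset_sum, Multiset.map_map, Function.comp_def] using h0

/-- attention-processor form can be re-expressed in ordinary-processor form,
via an injective sum-encoding of size-(K-1) multisets of rationals. -/
theorem attention_reexpressed_as_ordinary (K : ℕ) (hK : 2 ≤ K)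
    (f₂ : ℝ → ℝ → ℝ) (q₂ : ℝ → ℝ → ℝ) :
    ∃ q₁ : ℚ → (Fin K → ℝ),
      (∀ M M' : Multiset ℚ, Multiset.card M = K - 1 → Multiset.card M' = K - 1 →
        (M.map q₁).sum = (M'.map q₁).sum → M = M') ∧
      ∃ f₁ : ℝ → (Fin K → ℝ) → ℝ,
        ∀ (x : Fin K → ℚ) (k : Fin K),
          f₂ ((x k : ℝ)) (∑ j ∈ Finset.univ.erase k, q₂ (x k) (x j)) =
          f₁ ((x k : ℝ)) (∑ j ∈ Finset.univ.erase k, q₁ (x j)) := by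
  obtain ⟨q₁, hq₁⟩ := exists_injOn_multiset_sum_map ℚ hK
  obtain ⟨f, hf⟩ := hq₁.exists_eqOn_comp fun M a => f₂ a (M.map fun y : ℚ => q₂ a y).sum
  refine ⟨q₁, fun M M' hM hM' h => hq₁ hM hM' h, fun a v => f v a, fun x k => ?_⟩
  have hcard : Multiset.card ((Finset.univ.erase k).val.map x) = K - 1 := by simp
  simpa only [Finset.sum_eq_multiset_sum, Multiset.map_map, Function.comp_def]
    using congrFun (hf hcard) (x k)
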